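/- Let n be a positive integer and let H ∈ M_n(ℝ) be a symmetric positive definite matrix with nonpositive off-diagonal entries. Then for any indices 1 ≤ i, j ≤ n, one has H^{-1}(i,j) > 0 if and only if i and j are H-connected. -/

import Mathlib

/-!
For a Z-matrix `H`, positive definiteness makes `H` monotone: if `H x ≥ 0` then `x ≥ 0`, because
the negative part satisfies `x⁻ ⬝ H x⁻ = x⁻ ⬝ H x⁺ - x⁻ ⬝ H x ≤ 0`. Applied to the columns of `H⁻¹`
this gives `H⁻¹ ≥ 0`, and then the row equations of `H * H⁻¹ = 1` push positivity of the `j`-th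
column from `j` backwards along every edge of the graph of `H`. Conversely, masking `H⁻¹` to the
blocks of the connected components of this graph gives another right inverse of `H`, so `H⁻¹`
vanishes between different components.
-/

open Matrix

def HConnected {n : ℕ} (H : Matrix (Fin n) (Fin n) ℝ) (i j : Fin n) : Prop :=
  Relation.ReflTransGen (fun a b => H a b ≠ 0) i j

namespace Matrix

theorem inv_apply_eq_zero_of_forall_ne_zero_iff {ι R : Type*} [Fintype ι] [DecidableEq ι]
    [CommRing R] {A : Matrix ι ι R} (hA : IsUnit A) (p : ι → Prop)
    (hp : ∀ a k, A a k ≠ 0 → (p a ↔ p k)) {a b : ι} (ha : p a) (hb : ¬p b) :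
    A⁻¹ a b = 0 := by
  classical
  let M : Matrix ι ι R := fun a b => if p a ↔ p b then A⁻¹ a b else 0
  have hAM : A * M = 1 := by
    ext a b
    have hterm : ∀ k, A a k * M k b = if p a ↔ p b then A a k * A⁻¹ k b else 0 := by
      intro k
      by_cases hak : A a k = 0
      · simp [hak]
      · simp only [M, hp a k hak, mul_ite, mul_zero]
    have hrow : (A * M) a b = if p a ↔ p b then (A * A⁻¹) a b else 0 := by
      simp only [mul_apply, hterm]
      split_ifs <;> simp
    rw [hrow, mul_nonsing_inv _ ((isUnit_iff_isUnit_det A).1 hA)]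
    split_ifs with hab
    · rfl
    · have hne : a ≠ b := by rintro rfl; exact hab Iff.rfl
      rw [one_apply_ne hne]
  rw [inv_eq_right_inv hAM]
  simp [M, ha, hb]

theorem mulVec_col_inv {ι R : Type*} [Fintype ι] [DecidableEq ι] [CommRing R] {A : Matrix ι ι R}
    (hA : IsUnit A) (b : ι) : A *ᵥ A⁻¹.col b = Pi.single b 1 := by
  rw [← mulVec_single_one, mulVec_mulVec, mul_nonsing_inv _ ((isUnit_iff_isUnit_det A).1 hA),
    one_mulVec]

def IsZMatrix {ι : Type*} (H : Matrix ι ι ℝ) : Prop := ∀ i j, i ≠ j → H i j ≤ 0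

namespace IsZMatrix

variable {ι : Type*} {H : Matrix ι ι ℝ}

theorem mul_apply_nonpos_of_apply_eq_zero (hZ : H.IsZMatrix) {x : ι → ℝ} (hx : 0 ≤ x) {k : ι}
    (hk : x k = 0) (l : ι) : H k l * x l ≤ 0 := by
  rcases eq_or_ne k l with rfl | hkl
  · rw [hk, mul_zero]
  · exact mul_nonpos_of_nonpos_of_nonneg (hZ k l hkl) (hx l)

variable [Fintype ι]

theorem dotProduct_mulVec_nonpos (hZ : H.IsZMatrix) {u v : ι → ℝ} (hu : 0 ≤ u) (hv : 0 ≤ v)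
    (huv : ∀ k, u k * v k = 0) : u ⬝ᵥ H *ᵥ v ≤ 0 := by
  simp only [dotProduct, mulVec, Finset.mul_sum]
  refine Finset.sum_nonpos fun k _ => Finset.sum_nonpos fun l _ => ?_
  rcases eq_or_ne k l with rfl | hkl
  · rw [mul_left_comm, huv, mul_zero]
  · rw [mul_left_comm]
    exact mul_nonpos_of_nonpos_of_nonneg (hZ k l hkl) (mul_nonneg (hu k) (hv l))

theorem nonneg_of_mulVec_nonneg (hZ : H.IsZMatrix) (hpd : H.PosDef) {x : ι → ℝ}
    (hx : 0 ≤ H *ᵥ x) : 0 ≤ x := by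
  have hquad : x⁻ ⬝ᵥ H *ᵥ x⁻ ≤ 0 := by
    have hsplit : x⁻ ⬝ᵥ H *ᵥ x⁻ = x⁻ ⬝ᵥ H *ᵥ x⁺ - x⁻ ⬝ᵥ H *ᵥ x := by
      have hx_neg : x⁻ = x⁺ - x :=
        eq_sub_of_add_eq (sub_eq_iff_eq_add'.1 (posPart_sub_negPart x)).symm
      rw [← dotProduct_sub, ← mulVec_sub, ← hx_neg]
    rw [hsplit]
    have hcross := hZ.dotProduct_mulVec_nonpos (negPart_nonneg x) (posPart_nonneg x)
      fun k => by simpa using le_total 0 (x k)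
    have := dotProduct_nonneg_of_nonneg (negPart_nonneg x) hx
    linarith
  have hneg_zero : x⁻ = 0 := by
    by_contra h
    have := hpd.dotProduct_mulVec_pos h
    simp only [star_trivial] at this
    linarith
  exact negPart_eq_zero.1 hneg_zero

theorem inv_apply_nonneg [DecidableEq ι] (hZ : H.IsZMatrix) (hpd : H.PosDef) (a b : ι) :
    0 ≤ H⁻¹ a b :=
  hZ.nonneg_of_mulVec_nonneg hpd (x := H⁻¹.col b)
    (by rw [mulVec_col_inv hpd.isUnit]; exact Pi.single_nonneg.2 zero_le_one) a

theorem pos_of_reflTransGen (hZ : H.IsZMatrix) {x : ι → ℝ} (hx : 0 ≤ x) (hHx : 0 ≤ H *ᵥ x)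
    {i j : ι} (hij : Relation.ReflTransGen (fun a b => H a b ≠ 0) i j) (hj : 0 < (H *ᵥ x) j) :
    0 < x i := by
  induction hij using Relation.ReflTransGen.head_induction_on with
  | refl =>
    refine (hx j).lt_of_ne fun hxj => hj.not_ge ?_
    exact Finset.sum_nonpos fun l _ => hZ.mul_apply_nonpos_of_apply_eq_zero hx hxj.symm l
  | @head k l hkl _ hl =>
    refine (hx k).lt_of_ne fun hxk => ?_
    have hterms := hZ.mul_apply_nonpos_of_apply_eq_zero hx hxk.symm
    have hrow : ∑ m, H k m * x m = 0 :=
      le_antisymm (Finset.sum_nonpos fun m _ => hterms m) (hHx k)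
    have := (Finset.sum_eq_zero_iff_of_nonpos fun m _ => hterms m).1 hrow l (Finset.mem_univ l)
    exact (mul_eq_zero.1 this).elim hkl hl.ne'

end IsZMatrix
end Matrix

theorem stmt2 {n : ℕ} (H : Matrix (Fin n) (Fin n) ℝ)
    (hsymm : H.IsSymm) (hpd : H.PosDef)
    (hoff : ∀ i j : Fin n, i ≠ j → H i j ≤ 0) (i j : Fin n) :
    0 < H⁻¹ i j ↔ HConnected H i j := by
  have hZ : H.IsZMatrix := hoff
  constructor
  · intro hpos
    by_contra hij
    refine hpos.ne' (inv_apply_eq_zero_of_forall_ne_zero_iff hpd.isUnit (HConnected H i)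
      (fun a k hak => ⟨fun hia => hia.tail hak, fun hik => hik.tail ?_⟩) .refl hij)
    rwa [hsymm.apply]
  · intro hij
    have hcol := mulVec_col_inv hpd.isUnit j
    refine hZ.pos_of_reflTransGen (x := H⁻¹.col j) (fun k => hZ.inv_apply_nonneg hpd k j) ?_ hij ?_
    · rw [hcol]; exact Pi.single_nonneg.2 zero_le_one
    · rw [hcol, Pi.single_eq_same]
      exact one_pos
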